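/- Let d ≥ 1 and let ρ₀ be a measurable probability density on EuclideanSpace ℝ (Fin d) with respect to Lebesgue measure. Let 𝒜 denote the set of measurable probability densities ρ such that ρ(x) = 0 for almost every x with ρ₀(x) = 0 and such that ρ·log ρ and ρ·log ρ₀ are Lebesgue integrable. Suppose ρ̂ ∈ 𝒜 maximizes the functional ρ ↦ ∫ ρ·(−log ρ₀) − ∫ ρ log(ρ/ρ₀) over 𝒜. Then for every ρ ∈ 𝒜 one has −∫ ρ log ρ ≤ −∫ ρ̂ log ρ̂; that is, ρ̂ also maximizes the differential entropy over 𝒜, so that H(p*) − H(ρ̂) ≤ 0 where H(p*) = sup_{ρ ∈ 𝒜} H(ρ). -/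

import Mathlib

/-! With the KL coefficient equal to one, the cross-entropy term `∫ ρ (−log ρ₀)` cancels the
`−∫ ρ log ρ₀` part of `−KL(ρ, ρ₀)`, so on densities supported in `supp ρ₀` the fine-tuning
objective is exactly the differential entropy, and its maximizer maximizes the entropy. -/

open MeasureTheory Real

theorem mul_log_div_of_eq_zero_imp {r r₀ : ℝ} (hsupp : r₀ = 0 → r = 0) :
    r * log (r / r₀) = r * log r - r * log r₀ := by
  by_cases hr : r = 0
  · simp [hr]
  · rw [log_div hr fun hr₀ => hr (hsupp hr₀)]
    ring

theorem integral_mul_neg_log_sub_integral_mul_log_div {α : Type*} [MeasurableSpace α]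
    {μ : Measure α} {ρ ρ₀ : α → ℝ} (hsupp : ∀ᵐ x ∂μ, ρ₀ x = 0 → ρ x = 0)
    (hlog : Integrable (fun x => ρ x * log (ρ x)) μ)
    (hlog₀ : Integrable (fun x => ρ x * log (ρ₀ x)) μ) :
    (∫ x, ρ x * -log (ρ₀ x) ∂μ) - ∫ x, ρ x * log (ρ x / ρ₀ x) ∂μ = -∫ x, ρ x * log (ρ x) ∂μ := by
  have hkl : ∫ x, ρ x * log (ρ x / ρ₀ x) ∂μ =
      (∫ x, ρ x * log (ρ x) ∂μ) - ∫ x, ρ x * log (ρ₀ x) ∂μ := by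
    rw [← integral_sub hlog hlog₀]
    exact integral_congr_ae (hsupp.mono fun x => mul_log_div_of_eq_zero_imp)
  simp only [mul_neg, integral_neg, hkl]
  ring

theorem one_step_convergence_general
    (d : ℕ)
    (ρ₀ : EuclideanSpace ℝ (Fin d) → ℝ)
    (A : Set (EuclideanSpace ℝ (Fin d) → ℝ))
    (hA : A = {ρ | Measurable ρ ∧ (∀ x, 0 ≤ ρ x) ∧ (∫ x, ρ x) = 1 ∧
      (∀ᵐ x ∂(volume : Measure (EuclideanSpace ℝ (Fin d))), ρ₀ x = 0 → ρ x = 0) ∧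
      Integrable (fun x => ρ x * Real.log (ρ x)) ∧
      Integrable (fun x => ρ x * Real.log (ρ₀ x))})
    (ρhat : EuclideanSpace ℝ (Fin d) → ℝ) (hρhatA : ρhat ∈ A)
    (hmax : ∀ ρ ∈ A,
      (∫ x, ρ x * (-Real.log (ρ₀ x))) - (∫ x, ρ x * Real.log (ρ x / ρ₀ x)) ≤
      (∫ x, ρhat x * (-Real.log (ρ₀ x))) - (∫ x, ρhat x * Real.log (ρhat x / ρ₀ x))) :
    ∀ ρ ∈ A, (-∫ x, ρ x * Real.log (ρ x)) ≤ -∫ x, ρhat x * Real.log (ρhat x) := by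
  have objective_eq_entropy : ∀ ρ ∈ A,
      (∫ x, ρ x * (-Real.log (ρ₀ x))) - (∫ x, ρ x * Real.log (ρ x / ρ₀ x)) =
        -∫ x, ρ x * Real.log (ρ x) := by
    intro ρ hρ
    rw [hA] at hρ
    obtain ⟨-, -, -, hsupp, hlog, hlog₀⟩ := hρ
    exact integral_mul_neg_log_sub_integral_mul_log_div hsupp hlog hlog₀
  intro ρ hρ
  simpa only [objective_eq_entropy ρ hρ, objective_eq_entropy ρhat hρhatA] using hmax ρ hρ

/-- One-step convergence: a maximizer of the KL-regularized entropy first-variation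
objective `ρ ↦ ∫ ρ (−log ρ₀) − KL(ρ, ρ₀)` over the admissible class `𝒜` of densities
supported in the support of `ρ₀` also maximizes the differential entropy over `𝒜`. -/
theorem one_step_convergence
    (d : ℕ) (hd : 1 ≤ d)
    (ρ₀ : EuclideanSpace ℝ (Fin d) → ℝ)
    (hρ₀meas : Measurable ρ₀) (hρ₀nn : ∀ x, 0 ≤ ρ₀ x) (hρ₀1 : (∫ x, ρ₀ x) = 1)
    (A : Set (EuclideanSpace ℝ (Fin d) → ℝ))
    (hA : A = {ρ | Measurable ρ ∧ (∀ x, 0 ≤ ρ x) ∧ (∫ x, ρ x) = 1 ∧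
      (∀ᵐ x ∂(volume : Measure (EuclideanSpace ℝ (Fin d))), ρ₀ x = 0 → ρ x = 0) ∧
      Integrable (fun x => ρ x * Real.log (ρ x)) ∧
      Integrable (fun x => ρ x * Real.log (ρ₀ x))})
    (ρhat : EuclideanSpace ℝ (Fin d) → ℝ) (hρhatA : ρhat ∈ A)
    (hmax : ∀ ρ ∈ A,
      (∫ x, ρ x * (-Real.log (ρ₀ x))) - (∫ x, ρ x * Real.log (ρ x / ρ₀ x)) ≤
      (∫ x, ρhat x * (-Real.log (ρ₀ x))) - (∫ x, ρhat x * Real.log (ρhat x / ρ₀ x))) :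
    ∀ ρ ∈ A, (-∫ x, ρ x * Real.log (ρ x)) ≤ -∫ x, ρhat x * Real.log (ρhat x) :=
  one_step_convergence_general d ρ₀ A hA ρhat hρhatA hmax
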